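/- arXiv:0710.1461 — 5 statements merged into one kernel-verified Lean document; each statement's English description precedes it below -/
import Mathlib

section
/- Let X be a Polish space, J : X → [0,∞] a lower semicontinuous function, and Q a Borel probability measure on X. Then the supremum over all bounded continuous functions f on X of (∫ f dQ − sup_{x∈X} (f(x) − J(x))) equals ∫ J dQ. -/
open MeasureTheory
open scoped ENNReal NNReal BoundedContinuousFunction

/-! For `≤`: if `s = sup_x (f x - J x)` is finite then `f - s ≤ J` pointwise, so
`∫ f dQ - s ≤ ∫ J dQ`. For `≥`: the truncated inf-convolutions
`J_n x = inf_y (min (J y) n + n * dist x y)` are bounded, `n`-Lipschitz and below `J`, so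
`sup_x (J_n x - J x) ≤ 0`; by lower semicontinuity they increase to `J`, and monotone convergence
gives `∫ J_n dQ → ∫ J dQ`. -/

section LipschitzApprox

variable {X : Type*} [PseudoMetricSpace X]

noncomputable def lipschitzApprox (J : X → ℝ≥0∞) (n : ℕ) (x : X) : ℝ :=
  ⨅ y, (min (J y) n).toReal + n * dist x y

variable {J : X → ℝ≥0∞} {n : ℕ} {x : X}

lemma bddBelow_range_lipschitzApprox_term :
    BddBelow (Set.range fun y => (min (J y) n).toReal + n * dist x y) :=
  ⟨0, by rintro _ ⟨y, rfl⟩; positivity⟩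

lemma lipschitzApprox_nonneg : 0 ≤ lipschitzApprox J n x :=
  Real.iInf_nonneg fun _ => by positivity

lemma lipschitzApprox_le_toReal_min : lipschitzApprox J n x ≤ (min (J x) n).toReal := by
  simpa [lipschitzApprox] using
    ciInf_le (bddBelow_range_lipschitzApprox_term (J := J) (n := n) (x := x)) x

lemma lipschitzApprox_le_nat : lipschitzApprox J n x ≤ n :=
  lipschitzApprox_le_toReal_min.trans <| by
    simpa using ENNReal.toReal_mono (ENNReal.natCast_ne_top n) (min_le_right (J x) n)

lemma ofReal_lipschitzApprox_le : ENNReal.ofReal (lipschitzApprox J n x) ≤ J x :=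
  calc ENNReal.ofReal (lipschitzApprox J n x) ≤ ENNReal.ofReal (min (J x) n).toReal :=
        ENNReal.ofReal_le_ofReal lipschitzApprox_le_toReal_min
    _ ≤ J x := ENNReal.ofReal_toReal_le.trans (min_le_left _ _)

lemma lipschitzWith_lipschitzApprox : LipschitzWith n (lipschitzApprox J n) := by
  refine LipschitzWith.of_le_add_mul _ fun x x' => ?_
  have : Nonempty X := ⟨x⟩
  rw [← sub_le_iff_le_add]
  refine le_ciInf fun y => sub_le_iff_le_add.mpr ?_
  calc lipschitzApprox J n x ≤ (min (J y) n).toReal + n * dist x y :=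
        ciInf_le bddBelow_range_lipschitzApprox_term y
    _ ≤ (min (J y) n).toReal + n * dist x' y + n * dist x x' := by
        have := dist_triangle x x' y
        nlinarith [Nat.cast_nonneg (α := ℝ) n]

lemma monotone_lipschitzApprox (J : X → ℝ≥0∞) (x : X) :
    Monotone fun n => lipschitzApprox J n x := by
  intro n m hnm
  have : Nonempty X := ⟨x⟩
  refine le_ciInf fun y => (ciInf_le bddBelow_range_lipschitzApprox_term y).trans ?_
  gcongr
  exact ne_top_of_le_ne_top (ENNReal.natCast_ne_top m) (min_le_right _ _)

/-- Near `x` we have `J > r` by lower semicontinuity; away from `x` the penalty `n * dist x y`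
exceeds `r` once `n` is large. -/
lemma LowerSemicontinuous.exists_le_lipschitzApprox (hJ : LowerSemicontinuous J) {r : ℝ≥0}
    (hr : (r : ℝ≥0∞) < J x) :
    ∃ n, (r : ℝ) ≤ lipschitzApprox J n x := by
  have : Nonempty X := ⟨x⟩
  obtain ⟨δ, hδ, hJδ⟩ := Metric.eventually_nhds_iff.mp (hJ x _ hr)
  obtain ⟨n, hn⟩ := exists_nat_ge (max (r : ℝ) (r / δ))
  refine ⟨n, le_ciInf fun y => ?_⟩
  rcases lt_or_ge (dist y x) δ with hy | hy
  · have hrn : (r : ℝ≥0∞) ≤ min (J y) n :=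
      le_min (hJδ hy).le (by exact_mod_cast (le_max_left _ _).trans hn)
    have := ENNReal.toReal_mono (ne_top_of_le_ne_top (ENNReal.natCast_ne_top n)
      (min_le_right _ _)) hrn
    simp only [ENNReal.coe_toReal] at this
    nlinarith [dist_nonneg (x := x) (y := y), Nat.cast_nonneg (α := ℝ) n]
  · have : (r : ℝ) ≤ n * δ := (div_le_iff₀ hδ).mp ((le_max_right _ _).trans hn)
    rw [dist_comm] at hy
    nlinarith [ENNReal.toReal_nonneg (a := min (J y) n), Nat.cast_nonneg (α := ℝ) n]

lemma LowerSemicontinuous.iSup_ofReal_lipschitzApprox (hJ : LowerSemicontinuous J) (x : X) :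
    ⨆ n, ENNReal.ofReal (lipschitzApprox J n x) = J x := by
  refine le_antisymm (iSup_le fun n => ofReal_lipschitzApprox_le) ?_
  refine ENNReal.le_of_forall_nnreal_lt fun r hr => ?_
  obtain ⟨n, hn⟩ := hJ.exists_le_lipschitzApprox hr
  exact le_iSup_of_le n (by simpa using ENNReal.ofReal_le_ofReal hn)

noncomputable def lipschitzApproxBCF (J : X → ℝ≥0∞) (n : ℕ) : X →ᵇ ℝ :=
  .ofNormedAddCommGroup (lipschitzApprox J n) lipschitzWith_lipschitzApprox.continuous n
    fun _ => by rw [Real.norm_of_nonneg lipschitzApprox_nonneg]; exact lipschitzApprox_le_nat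

end LipschitzApprox

lemma ENNReal.ofReal_le_of_coe_ereal_le {r : ℝ} {a : ℝ≥0∞} (h : (r : EReal) ≤ a) :
    ENNReal.ofReal r ≤ a := by
  simpa [EReal.toENNReal_coe] using EReal.toENNReal_le_toENNReal h

lemma EReal.coe_le_coe_ennreal_ofReal (r : ℝ) : (r : EReal) ≤ (ENNReal.ofReal r : EReal) := by
  rw [EReal.coe_ennreal_ofReal]
  exact_mod_cast le_max_left _ _

lemma EReal.coe_ennreal_iSup {ι : Sort*} [Nonempty ι] (f : ι → ℝ≥0∞) :
    ((⨆ i, f i : ℝ≥0∞) : EReal) = ⨆ i, (f i : EReal) :=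
  Monotone.map_ciSup_of_continuousAt continuous_coe_ennreal_ereal.continuousAt
    (fun _ _ => EReal.coe_ennreal_le_coe_ennreal_iff.mpr) (OrderTop.bddAbove _)

section Duality

variable {X : Type*} [MeasurableSpace X] {μ : Measure X}

lemma MeasureTheory.ofReal_integral_le_lintegral_ofReal {g : X → ℝ} (hg : Integrable g μ) :
    ENNReal.ofReal (∫ x, g x ∂μ) ≤ ∫⁻ x, ENNReal.ofReal (g x) ∂μ :=
  ENNReal.ofReal_le_of_le_toReal <| by
    rw [integral_eq_lintegral_pos_part_sub_lintegral_neg_part hg]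
    exact sub_le_self _ ENNReal.toReal_nonneg

lemma coe_integral_sub_iSup_sub_le_lintegral [IsProbabilityMeasure μ] {f : X → ℝ}
    (hf : Integrable f μ) (J : X → ℝ≥0∞) :
    ((∫ x, f x ∂μ : ℝ) : EReal) - ⨆ x, ((f x : EReal) - J x) ≤
      ((∫⁻ x, J x ∂μ : ℝ≥0∞) : EReal) := by
  generalize hS : ⨆ x, ((f x : EReal) - J x) = S
  have hle : ∀ x, (f x : EReal) - J x ≤ S :=
    fun x => hS ▸ le_iSup (fun x => (f x : EReal) - J x) x
  induction S using EReal.rec with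
  | bot =>
    have hJ : ∀ x, J x = ⊤ := fun x => by
      simpa [sub_eq_add_neg, EReal.add_eq_bot_iff] using hle x
    simp [hJ]
  | coe s =>
    have hpt : ∀ x, ENNReal.ofReal (f x - s) ≤ J x := fun x => by
      refine ENNReal.ofReal_le_of_coe_ereal_le ?_
      have hfx := (EReal.sub_le_iff_le_add (by simp) (by simp)).mp (hle x)
      rw [EReal.coe_sub]
      exact (EReal.sub_le_iff_le_add (by simp) (by simp)).mpr (by rwa [add_comm] at hfx)
    have hfs : Integrable (fun x => f x - s) μ := hf.sub (integrable_const s)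
    calc ((∫ x, f x ∂μ : ℝ) : EReal) - s = ((∫ x, (f x - s) ∂μ : ℝ) : EReal) := by
          simp [integral_sub hf (integrable_const s), EReal.coe_sub]
      _ ≤ (ENNReal.ofReal (∫ x, (f x - s) ∂μ) : EReal) := EReal.coe_le_coe_ennreal_ofReal _
      _ ≤ ((∫⁻ x, J x ∂μ : ℝ≥0∞) : EReal) := EReal.coe_ennreal_le_coe_ennreal_iff.mpr <|
          (ofReal_integral_le_lintegral_ofReal hfs).trans (lintegral_mono hpt)
  | top => simp

lemma coe_integral_le_integral_sub_iSup_sub {f : X → ℝ} {J : X → ℝ≥0∞}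
    (hfJ : ∀ x, ENNReal.ofReal (f x) ≤ J x) :
    ((∫ x, f x ∂μ : ℝ) : EReal) ≤ ((∫ x, f x ∂μ : ℝ) : EReal) - ⨆ x, ((f x : EReal) - J x) := by
  refine (sub_zero _).symm.le.trans (EReal.sub_le_sub le_rfl (iSup_le fun x => ?_))
  exact EReal.sub_nonpos.mpr <| (EReal.coe_le_coe_ennreal_ofReal _).trans <|
    EReal.coe_ennreal_le_coe_ennreal_iff.mpr (hfJ x)

end Duality

lemma LowerSemicontinuous.coe_lintegral_le_iSup_integral_sub_iSup_sub {X : Type*}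
    [PseudoMetricSpace X] [MeasurableSpace X] [OpensMeasurableSpace X] {μ : Measure X}
    [IsFiniteMeasure μ] {J : X → ℝ≥0∞} (hJ : LowerSemicontinuous J) :
    ((∫⁻ x, J x ∂μ : ℝ≥0∞) : EReal) ≤
      ⨆ f : X →ᵇ ℝ, (((∫ x, f x ∂μ : ℝ) : EReal) - ⨆ x, ((f x : EReal) - J x)) := by
  have hmeas (n : ℕ) : Measurable fun x => ENNReal.ofReal (lipschitzApprox J n x) :=
    lipschitzWith_lipschitzApprox.continuous.measurable.ennreal_ofReal
  have hmono : Monotone fun n x => ENNReal.ofReal (lipschitzApprox J n x) :=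
    fun n m hnm x => ENNReal.ofReal_le_ofReal (monotone_lipschitzApprox J x hnm)
  have hJ_eq : ∫⁻ x, J x ∂μ = ⨆ n, ∫⁻ x, ENNReal.ofReal (lipschitzApprox J n x) ∂μ := by
    rw [← lintegral_iSup hmeas hmono]
    exact lintegral_congr fun x => (hJ.iSup_ofReal_lipschitzApprox x).symm
  rw [hJ_eq, EReal.coe_ennreal_iSup]
  refine iSup_le fun n => le_iSup_of_le (lipschitzApproxBCF J n) ?_
  have hcoe : ((∫⁻ x, ENNReal.ofReal (lipschitzApprox J n x) ∂μ : ℝ≥0∞) : EReal) =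
      ((∫ x, lipschitzApprox J n x ∂μ : ℝ) : EReal) := by
    have hint : Integrable (lipschitzApprox J n) μ := (lipschitzApproxBCF J n).integrable μ
    rw [← ofReal_integral_eq_lintegral_ofReal hint
      (ae_of_all _ fun _ => lipschitzApprox_nonneg), EReal.coe_ennreal_ofReal,
      max_eq_left (integral_nonneg fun _ => lipschitzApprox_nonneg)]
  exact hcoe.le.trans (coe_integral_le_integral_sub_iSup_sub fun _ => ofReal_lipschitzApprox_le)

theorem stmt0_general {X : Type*} [MetricSpace X] [MeasurableSpace X] [BorelSpace X]
    (J : X → ℝ≥0∞) (hJ : LowerSemicontinuous J)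
    (Q : Measure X) [IsProbabilityMeasure Q] :
    (⨆ f : X →ᵇ ℝ,
        (((∫ x, f x ∂Q : ℝ) : EReal) - ⨆ x : X, ((f x : EReal) - (J x : EReal))))
      = ((∫⁻ x, J x ∂Q : ℝ≥0∞) : EReal) :=
  le_antisymm (iSup_le fun f => coe_integral_sub_iSup_sub_le_lintegral (f.integrable Q) J)
    hJ.coe_lintegral_le_iSup_integral_sub_iSup_sub

/-- Lemma `res-25a`: for a Polish space `X`, a lower semicontinuous `J : X → [0,∞]`
and a Borel probability measure `Q`,
`sup_{f ∈ C_b(X)} ( ∫ f dQ − sup_x (f x − J x) ) = ∫ J dQ`. -/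
theorem stmt0 {X : Type*} [MetricSpace X] [CompleteSpace X]
    [TopologicalSpace.SeparableSpace X] [MeasurableSpace X] [BorelSpace X]
    (J : X → ℝ≥0∞) (hJ : LowerSemicontinuous J)
    (Q : Measure X) [IsProbabilityMeasure Q] :
    (⨆ f : X →ᵇ ℝ,
        (((∫ x, f x ∂Q : ℝ) : EReal) - ⨆ x : X, ((f x : EReal) - (J x : EReal))))
      = ((∫⁻ x, J x ∂Q : ℝ≥0∞) : EReal) :=
  stmt0_general J hJ Q
end

section
/- Let X be a metric space, J : X → [0,∞] an inf-compact function (all sublevel sets {J ≤ a} compact), and (f_n) a decreasing sequence of bounded continuous functions on X converging pointwise to a bounded upper semicontinuous function f. Then the sequence (sup_{x∈X} {f_n(x) − J(x)})_n is decreasing and converges to sup_{x∈X} {f(x) − J(x)}. -/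
open Filter Topology
open scoped ENNReal BoundedContinuousFunction

private lemma ennreal_coe_eq_toReal {p : ℝ≥0∞} (hp : p ≠ ⊤) :
    (p : EReal) = ((p.toReal : ℝ) : EReal) := by
  rw [← EReal.toReal_coe_ennreal, EReal.coe_toReal]
  · simpa [EReal.coe_ennreal_eq_top_iff] using hp
  · exact EReal.coe_ennreal_ne_bot p

/-- Lemma `res-26`: if `J : X → [0,∞]` is inf-compact (and not identically `+∞`) and
`(f n)` is a decreasing sequence of bounded continuous functions converging pointwise to a
bounded upper semicontinuous `f`, then `n ↦ sup_x (f n x − J x)` is decreasing and converges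
to `sup_x (f x − J x)`. -/
theorem stmt1 {X : Type*} [MetricSpace X]
    (J : X → ℝ≥0∞) (hJcompact : ∀ a : ℝ≥0∞, IsCompact {x | J x ≤ a})
    (hJne : ∃ x, J x ≠ ⊤)
    (f : ℕ → X →ᵇ ℝ) (hdec : ∀ x, Antitone fun n => f n x)
    (g : X → ℝ) (hgbd : ∃ C : ℝ, ∀ x, |g x| ≤ C) (hgusc : UpperSemicontinuous g)
    (hlim : ∀ x, Tendsto (fun n => f n x) atTop (𝓝 (g x))) :
    (Antitone fun n => ⨆ x : X, ((f n x : EReal) - (J x : EReal))) ∧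
      Tendsto (fun n => ⨆ x : X, ((f n x : EReal) - (J x : EReal))) atTop
        (𝓝 (⨆ x : X, ((g x : EReal) - (J x : EReal)))) := by
  -- antitonicity
  have hanti : Antitone fun n => ⨆ x : X, ((f n x : EReal) - (J x : EReal)) := by
    intro n m hnm
    refine iSup_mono fun x => EReal.sub_le_sub ?_ le_rfl
    exact_mod_cast hdec x hnm
  refine ⟨hanti, ?_⟩
  -- g ≤ f n pointwise
  have hgle : ∀ n x, g x ≤ f n x := fun n x =>
    le_of_tendsto (hlim x) (eventually_atTop.2 ⟨n, fun m hm => hdec x hm⟩)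
  -- it converges to the infimum
  have htend := tendsto_atTop_iInf hanti
  set S : EReal := ⨆ x : X, ((g x : EReal) - (J x : EReal)) with hS
  set L : EReal := ⨅ n, ⨆ x : X, ((f n x : EReal) - (J x : EReal)) with hL
  suffices hLS : L = S by rwa [hLS] at htend
  have hSL : S ≤ L := by
    refine le_iInf fun n => iSup_mono fun x => EReal.sub_le_sub ?_ le_rfl
    exact_mod_cast hgle n x
  refine le_antisymm ?_ hSL
  by_contra hlt
  push_neg at hlt
  obtain ⟨t, htS, htL⟩ := EReal.exists_between_coe_real hlt
  -- for each n, a point nearly achieving the sup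
  have hpt : ∀ n : ℕ, ∃ x : X, (t : EReal) < (f n x : EReal) - (J x : EReal) := by
    intro n
    have : (t : EReal) < ⨆ x : X, ((f n x : EReal) - (J x : EReal)) :=
      htL.trans_le (iInf_le _ n)
    exact lt_iSup_iff.1 this
  choose x hx using hpt
  -- each J (x n) is finite and bounded
  have hJfin : ∀ n, J (x n) ≠ ⊤ := by
    intro n hJt
    have := hx n
    rw [hJt] at this
    simp only [EReal.coe_ennreal_top] at this
    rw [EReal.sub_top] at this
    exact (not_lt_bot this)
  have hxreal : ∀ n, t + (J (x n)).toReal < f n (x n) := by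
    intro n
    have h := hx n
    rw [ennreal_coe_eq_toReal (hJfin n), ← EReal.coe_sub, EReal.coe_lt_coe_iff] at h
    linarith
  set B : ℝ := ‖f 0‖ with hB
  have hfB : ∀ n y, f n y ≤ B := fun n y =>
    (hdec y (Nat.zero_le n)).trans ((abs_le.1 (BoundedContinuousFunction.norm_coe_le_norm (f 0) y)).2)
  set a : ℝ≥0∞ := ENNReal.ofReal (B - t) with ha
  have hxa : ∀ n, J (x n) ≤ a := by
    intro n
    have h1 : (J (x n)).toReal ≤ B - t := by
      have := hxreal n
      have := hfB n (x n)
      linarith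
    have h0 : (0 : ℝ) ≤ B - t := le_trans ENNReal.toReal_nonneg h1
    rw [ha, ENNReal.le_ofReal_iff_toReal_le (hJfin n) h0]
    exact h1
  -- extract a convergent subsequence
  obtain ⟨z, hz, φ, hφ, hφt⟩ := (hJcompact a).tendsto_subseq hxa
  have hza : J z ≤ a := hz
  have hJz : J z ≠ ⊤ := fun h => by
    rw [h] at hza
    exact (lt_irrefl ⊤ (lt_of_le_of_lt hza (by simpa [ha] using ENNReal.ofReal_lt_top))).elim
  -- key: for all m, t + (J z).toReal ≤ f m z
  have hkey : ∀ m : ℕ, t + (J z).toReal ≤ f m z := by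
    intro m
    by_contra hcon
    push_neg at hcon
    obtain ⟨c, hc1, hc2⟩ := exists_between hcon
    -- eventually (J (x (φ k))).toReal > c - t
    have hev : ∀ᶠ k in atTop, c - t < (J (x (φ k))).toReal := by
      rcases lt_or_ge (c - t) 0 with h | h
      · exact Eventually.of_forall fun k => lt_of_lt_of_le h ENNReal.toReal_nonneg
      · have hlt' : ENNReal.ofReal (c - t) < J z := by
          rw [← ENNReal.ofReal_toReal hJz]
          exact ENNReal.ofReal_lt_ofReal_iff_of_nonneg h |>.2 (by linarith)
        -- J is lower semicontinuous at z via closed sublevel sets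
        have hcl : IsClosed {y | J y ≤ ENNReal.ofReal (c - t)} :=
          (hJcompact _).isClosed
        have hzo : z ∈ {y | J y ≤ ENNReal.ofReal (c - t)}ᶜ := fun hmem => absurd hlt' (not_lt.2 hmem)
        have hnb : {y | J y ≤ ENNReal.ofReal (c - t)}ᶜ ∈ 𝓝 z :=
          hcl.isOpen_compl.mem_nhds hzo
        filter_upwards [hφt hnb] with k hk
        have hk' : ENNReal.ofReal (c - t) < J (x (φ k)) := not_le.1 hk
        have : ENNReal.ofReal (c - t) ≠ ⊤ := ENNReal.ofReal_ne_top
        calc c - t = (ENNReal.ofReal (c - t)).toReal := by rw [ENNReal.toReal_ofReal h]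
          _ < (J (x (φ k))).toReal :=
            ENNReal.toReal_strict_mono (hJfin _) hk'
    -- eventually f m (x (φ k)) > c
    have hev2 : ∀ᶠ k in atTop, c < f m (x (φ k)) := by
      filter_upwards [hev, eventually_ge_atTop m] with k hk hkm
      have h1 : f (φ k) (x (φ k)) ≤ f m (x (φ k)) := hdec _ (le_trans hkm (hφ.le_apply))
      have h2 := hxreal (φ k)
      linarith
    -- pass to the limit
    have hlim2 : Tendsto (fun k => f m (x (φ k))) atTop (𝓝 (f m z)) :=
      ((f m).continuous.tendsto z).comp hφt
    have : c ≤ f m z := ge_of_tendsto hlim2 (hev2.mono fun k hk => hk.le)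
    linarith
  -- pass to the limit in m
  have hgz : t + (J z).toReal ≤ g z := ge_of_tendsto (hlim z) (Eventually.of_forall hkey)
  -- contradiction with t > S
  have : (t : EReal) ≤ (g z : EReal) - (J z : EReal) := by
    rw [ennreal_coe_eq_toReal hJz, ← EReal.coe_sub, EReal.coe_le_coe_iff]
    linarith
  exact absurd (this.trans (le_iSup (fun y : X => (g y : EReal) - (J y : EReal)) z)) (not_le.2 htS)
end

section
/- Let X, Y be vector spaces in separating duality, with X given the weak topology σ(X,Y). Let f : X → (−∞,+∞] be a lower semicontinuous convex function whose effective domain is contained in a compact set, and let V ⊆ X be a closed convex set with V ∩ dom f ≠ ∅ and inf_{x∈V} f(x) < +∞. Then inf_{x∈V} f(x) = −inf_{y∈Y} (f*(y) + ξ_V*(−y)), where f* is the convex conjugate of f and ξ_V*(y) = sup_{x∈V} ⟨x,y⟩ is the support function of V. -/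
/-!
Weak duality is the Fenchel–Young inequality. For the converse take a real `r < inf_V f` and the
convex set `S = {(x - v, s) | v ∈ V, f x ≤ s} ⊆ X × ℝ`, the epigraph of the perturbation
`z ↦ inf {f x | x - z ∈ V}`. Because `dom f` lies in a compact set, the closure of `S` stays inside
`{(z, s) | ∃ x ∈ K, x - z ∈ V, f x ≤ s}`, which misses `(0, r)`. Hahn–Banach separates `(0, r)`
from `S`; as `S` is upward closed in `s` and meets `{0} × ℝ`, the separating hyperplane is not
vertical. Its slope is a continuous functional on `σ(X, Y)`, hence `⟨·, y⟩` for some `y`, and this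
`y` satisfies `f*(y) + ξ_V*(-y) ≤ -r`.
-/

open scoped Pointwise

theorem IsCompact.isClosed_setOf_exists_mem {α β : Type*} [TopologicalSpace α]
    [TopologicalSpace β] {K : Set α} (hK : IsCompact K) {C : Set (α × β)} (hC : IsClosed C) :
    IsClosed {b | ∃ a ∈ K, (a, b) ∈ C} := by
  have : CompactSpace K := isCompact_iff_compactSpace.mp hK
  have hpre : IsClosed ((fun q : K × β => ((q.1 : α), q.2)) ⁻¹' C) :=
    hC.preimage (by fun_prop)
  convert isClosedMap_snd_of_compactSpace _ hpre using 1
  ext b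
  simp

theorem EReal.iSup_add_biSup_le {ι κ : Type*} {u : ι → EReal} {s : Set κ} {v : κ → EReal}
    {c : EReal} (h : ∀ i, ∀ j ∈ s, u i + v j ≤ c) : (⨆ i, u i) + ⨆ j ∈ s, v j ≤ c := by
  refine EReal.add_le_of_forall_lt fun a ha b hb => ?_
  obtain ⟨i, hi⟩ := lt_iSup_iff.mp ha
  obtain ⟨j, hj, hj'⟩ := lt_biSup_iff.mp hb
  exact (add_le_add hi.le hj'.le).trans (h i j hj)

theorem EReal.coe_sub_add_coe_neg (b : ℝ) (a : EReal) :
    ((b : EReal) - a) + ((-b : ℝ) : EReal) = -a := by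
  rw [sub_eq_add_neg, add_right_comm, ← EReal.coe_add, add_neg_cancel, EReal.coe_zero, zero_add]

section Epigraph

variable {E : Type*} [AddCommGroup E] [Module ℝ E]

theorem convex_setOf_le_coe {f : E → EReal}
    (hconv : ∀ (x₁ x₂ : E) (t : ℝ), 0 ≤ t → t ≤ 1 →
      f (t • x₁ + (1 - t) • x₂) ≤ (t : EReal) * f x₁ + ((1 - t : ℝ) : EReal) * f x₂) :
    Convex ℝ {p : E × ℝ | f p.1 ≤ p.2} := by
  rintro p hp q hq a b ha hb hab
  obtain rfl : b = 1 - a := by linarith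
  calc f (a • p.1 + (1 - a) • q.1)
      ≤ (a : EReal) * f p.1 + ((1 - a : ℝ) : EReal) * f q.1 := hconv _ _ a ha (by linarith)
    _ ≤ (a : EReal) * p.2 + ((1 - a : ℝ) : EReal) * q.2 := by
      gcongr <;> exact_mod_cast (by assumption)
    _ = ((a • p + (1 - a) • q).2 : ℝ) := by simp

end Epigraph

section Separation

variable {E : Type*} [AddCommGroup E] [Module ℝ E] [TopologicalSpace E] [IsTopologicalAddGroup E]
  [ContinuousSMul ℝ E] [LocallyConvexSpace ℝ E]

theorem Convex.exists_nonvertical_separation {S : Set (E × ℝ)} (hS : Convex ℝ S)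
    (hup : ∀ z s t, (z, s) ∈ S → s ≤ t → (z, t) ∈ S) {s₀ r : ℝ} (h₀ : ((0 : E), s₀) ∈ S)
    (hr : ((0 : E), r) ∉ closure S) :
    ∃ φ : StrongDual ℝ E, ∀ p ∈ S, φ p.1 + r < p.2 := by
  obtain ⟨L, u, hLr, hLS⟩ := geometric_hahn_banach_point_closed hS.closure isClosed_closure hr
  set c := L ((0 : E), (1 : ℝ))
  have hL : ∀ z s, L (z, s) = L (z, 0) + s * c := fun z s => by
    rw [← smul_eq_mul, ← map_smul, ← map_add, Prod.smul_mk, smul_zero, smul_eq_mul, mul_one,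
      Prod.mk_add_mk, add_zero, zero_add]
  have hr' : r * c < u := by
    rwa [hL, Prod.mk_zero_zero, map_zero, zero_add] at hLr
  have hc : 0 < c := by
    have hmax := hLS _ (subset_closure (hup _ _ _ h₀ (le_max_left s₀ r)))
    rw [hL, Prod.mk_zero_zero, map_zero, zero_add] at hmax
    by_contra! hc
    linarith [mul_le_mul_of_nonpos_right (le_max_right s₀ r) hc]
  refine ⟨-c⁻¹ • L.comp (ContinuousLinearMap.inl ℝ E ℝ), fun p hp => ?_⟩
  have hp' := hLS p (subset_closure hp)
  rw [hL] at hp'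
  have : r - p.2 < L (p.1, 0) / c := by rw [lt_div_iff₀ hc]; linarith
  simp only [smul_apply, ContinuousLinearMap.comp_apply,
    ContinuousLinearMap.inl_apply, smul_eq_mul, neg_mul, ← div_eq_inv_mul]
  linarith

end Separation

section Perturbation

variable {E : Type*} [AddCommGroup E] [Module ℝ E] [TopologicalSpace E] [IsTopologicalAddGroup E]
  [ContinuousSMul ℝ E] [LocallyConvexSpace ℝ E]

theorem exists_strongDual_add_lt_of_lt_biInf {f : E → EReal} (hlsc : LowerSemicontinuous f)
    (hconv : ∀ (x₁ x₂ : E) (t : ℝ), 0 ≤ t → t ≤ 1 →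
      f (t • x₁ + (1 - t) • x₂) ≤ (t : EReal) * f x₁ + ((1 - t : ℝ) : EReal) * f x₂)
    {K : Set E} (hK : IsCompact K) (hdom : {x | f x ≠ ⊤} ⊆ K)
    {V : Set E} (hVcl : IsClosed V) (hVconv : Convex ℝ V) {x₀ : E} (hx₀V : x₀ ∈ V)
    (hx₀ : f x₀ ≠ ⊤) {r : ℝ} (hr : (r : EReal) < ⨅ x ∈ V, f x) :
    ∃ φ : StrongDual ℝ E, ∀ x, ∀ v ∈ V, ∀ s : ℝ, f x ≤ s → φ (x - v) + r < s := by
  set S : Set (E × ℝ) := {p : E × ℝ | f p.1 ≤ p.2} + (-V) ×ˢ ({0} : Set ℝ)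
  have hmemS : ∀ x, ∀ v ∈ V, ∀ s : ℝ, f x ≤ s → (x - v, s) ∈ S := fun x v hv s hs =>
    ⟨(x, s), hs, (-v, 0), ⟨by simpa using hv, rfl⟩, by simp [sub_eq_add_neg]⟩
  have hup : ∀ z s t, (z, s) ∈ S → s ≤ t → (z, t) ∈ S := by
    rintro z s t ⟨⟨x, s'⟩, hx, ⟨w, o⟩, ⟨hw, rfl : o = 0⟩, heq⟩ hst
    simp only [Prod.mk_add_mk, add_zero, Prod.mk.injEq] at heq
    obtain ⟨rfl, rfl⟩ := heq
    simpa using hmemS x (-w) hw t (hx.trans (EReal.coe_le_coe_iff.mpr hst))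
  set T : Set (E × ℝ) := {p | ∃ x ∈ K, x - p.1 ∈ V ∧ f x ≤ p.2}
  have hTcl : IsClosed T := by
    refine hK.isClosed_setOf_exists_mem (C := {q : E × (E × ℝ) | q.1 - q.2.1 ∈ V ∧ f q.1 ≤ q.2.2})
      ((hVcl.preimage (by fun_prop)).inter ?_)
    exact hlsc.isClosed_epigraph.preimage (f := fun q : E × (E × ℝ) => (q.1, (q.2.2 : EReal)))
      (continuous_fst.prodMk (continuous_coe_real_ereal.comp (by fun_prop)))
  have hST : S ⊆ T := by
    rintro _ ⟨⟨x, s⟩, hx, ⟨w, o⟩, ⟨hw, rfl : o = 0⟩, rfl⟩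
    exact ⟨x, hdom (hx.trans_lt (EReal.coe_lt_top s)).ne, by simpa using hw, by simpa using hx⟩
  have hrS : ((0 : E), r) ∉ closure S := fun h => by
    obtain ⟨x, -, hxV, hxr⟩ := closure_minimal hST hTcl h
    exact (hr.trans_le ((iInf₂_le x (by simpa using hxV)).trans hxr)).false
  obtain ⟨φ, hφ⟩ := ((convex_setOf_le_coe hconv).add (hVconv.neg.prod (convex_singleton 0)))
    |>.exists_nonvertical_separation hup
      (sub_self x₀ ▸ hmemS x₀ x₀ hx₀V _ (EReal.le_coe_toReal hx₀)) hrS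
  exact ⟨φ, fun x v hv s hs => hφ _ (hmemS x v hv s hs)⟩

end Perturbation

section Duality

variable {X Y : Type*} [AddCommGroup X] [Module ℝ X] [AddCommGroup Y] [Module ℝ Y]
  (B : X →ₗ[ℝ] Y →ₗ[ℝ] ℝ)

noncomputable def fenchelConjugate (f : WeakBilin B → EReal) (y : Y) : EReal :=
  ⨆ x : WeakBilin B, ((B x y : EReal) - f x)

noncomputable def supportFunction (V : Set (WeakBilin B)) (y : Y) : EReal :=
  ⨆ x ∈ V, ((B x y : ℝ) : EReal)

variable {B}

theorem neg_biInf_le_fenchelConjugate_add_supportFunction (f : WeakBilin B → EReal)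
    (V : Set (WeakBilin B)) (y : Y) :
    -(⨅ x ∈ V, f x) ≤ fenchelConjugate B f y + supportFunction B V (-y) := by
  rw [EReal.neg_le]
  refine le_iInf₂ fun x hx => EReal.neg_le.mp ?_
  calc -f x = ((B x y : EReal) - f x) + ((B x (-y) : ℝ) : EReal) := by
        rw [map_neg, EReal.coe_sub_add_coe_neg]
    _ ≤ _ := add_le_add (le_iSup (fun x => (B x y : EReal) - f x) x)
        (le_iSup₂ (f := fun x (_ : x ∈ V) => ((B x (-y) : ℝ) : EReal)) x hx)

theorem exists_fenchelConjugate_add_supportFunction_le {f : WeakBilin B → EReal}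
    (hlsc : LowerSemicontinuous f)
    (hconv : ∀ (x₁ x₂ : WeakBilin B) (t : ℝ), 0 ≤ t → t ≤ 1 →
      f (t • x₁ + (1 - t) • x₂) ≤ (t : EReal) * f x₁ + ((1 - t : ℝ) : EReal) * f x₂)
    {K : Set (WeakBilin B)} (hK : IsCompact K) (hdom : {x | f x ≠ ⊤} ⊆ K)
    {V : Set (WeakBilin B)} (hVcl : IsClosed V) (hVconv : Convex ℝ V)
    (hVdom : (V ∩ {x | f x ≠ ⊤}).Nonempty) {r : ℝ} (hr : (r : EReal) < ⨅ x ∈ V, f x) :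
    ∃ y : Y, fenchelConjugate B f y + supportFunction B V (-y) ≤ ((-r : ℝ) : EReal) := by
  obtain ⟨x₀, hx₀V, hx₀⟩ := hVdom
  obtain ⟨φ, hφ⟩ :=
    exists_strongDual_add_lt_of_lt_biInf hlsc hconv hK hdom hVcl hVconv hx₀V hx₀ hr
  obtain ⟨y, rfl⟩ := LinearMap.dualEmbedding_surjective B φ
  refine ⟨y, EReal.iSup_add_biSup_le fun x v hv => ?_⟩
  have hxv : ∀ s : ℝ, f x ≤ s → B x y - s + B v (-y) < -r := fun s hs => by
    have := hφ x v hv s hs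
    rw [map_sub] at this
    change B x y - B v y + r < s at this
    rw [map_neg]
    linarith
  induction hfx : f x using EReal.rec with
  | bot =>
    have := hxv (B x y + B v (-y) + r) (hfx ▸ bot_le)
    linarith
  | top => simp
  | coe s =>
    rw [← EReal.coe_sub, ← EReal.coe_add, EReal.coe_le_coe_iff]
    exact (hxv s hfx.le).le

end Duality

theorem stmt4_general {X Y : Type*} [AddCommGroup X] [Module ℝ X] [AddCommGroup Y] [Module ℝ Y]
    (B : X →ₗ[ℝ] Y →ₗ[ℝ] ℝ)
    (f : WeakBilin B → EReal)
    (hlsc : LowerSemicontinuous f)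
    (hconv : ∀ (x₁ x₂ : WeakBilin B) (t : ℝ), 0 ≤ t → t ≤ 1 →
      f (t • x₁ + (1 - t) • x₂) ≤ (t : EReal) * f x₁ + ((1 - t : ℝ) : EReal) * f x₂)
    (K : Set (WeakBilin B)) (hK : IsCompact K) (hdom : {x | f x ≠ ⊤} ⊆ K)
    (V : Set (WeakBilin B)) (hVcl : IsClosed V) (hVconv : Convex ℝ (V : Set (WeakBilin B)))
    (hVdom : (V ∩ {x | f x ≠ ⊤}).Nonempty) :
    (⨅ x ∈ V, f x)
      = - ⨅ y : Y, ((⨆ x : WeakBilin B, ((B x y : EReal) - f x))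
          + ⨆ x ∈ V, ((B x (-y) : ℝ) : EReal)) := by
  change _ = -⨅ y : Y, fenchelConjugate B f y + supportFunction B V (-y)
  refine le_antisymm (EReal.ge_of_forall_gt_iff_ge.mp fun r hr => ?_)
    (EReal.neg_le.mp (le_iInf (neg_biInf_le_fenchelConjugate_add_supportFunction f V)))
  obtain ⟨y, hy⟩ :=
    exists_fenchelConjugate_add_supportFunction_le hlsc hconv hK hdom hVcl hVconv hVdom hr
  exact EReal.le_neg_of_le_neg ((iInf_le _ y).trans hy)

/-- Lemma `app-A1`, first case: `X, Y` in separating duality, `X` with the weak topology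
`σ(X,Y)`; `f : X → (−∞,∞]` lower semicontinuous and convex with `dom f` contained in a
compact set; `V` closed convex with `V ∩ dom f ≠ ∅` and `inf_V f < +∞`.  Then
`inf_{x∈V} f(x) = − inf_{y∈Y} ( f*(y) + ξ_V*(−y) )`. -/
theorem stmt4 {X Y : Type*} [AddCommGroup X] [Module ℝ X] [AddCommGroup Y] [Module ℝ Y]
    (B : X →ₗ[ℝ] Y →ₗ[ℝ] ℝ)
    (hsepX : ∀ x : X, x ≠ 0 → ∃ y : Y, B x y ≠ 0)
    (hsepY : ∀ y : Y, y ≠ 0 → ∃ x : X, B x y ≠ 0)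
    (f : WeakBilin B → EReal)
    (hbot : ∀ x, f x ≠ ⊥)
    (hlsc : LowerSemicontinuous f)
    (hconv : ∀ (x₁ x₂ : WeakBilin B) (t : ℝ), 0 ≤ t → t ≤ 1 →
      f (t • x₁ + (1 - t) • x₂) ≤ (t : EReal) * f x₁ + ((1 - t : ℝ) : EReal) * f x₂)
    (K : Set (WeakBilin B)) (hK : IsCompact K) (hdom : {x | f x ≠ ⊤} ⊆ K)
    (V : Set (WeakBilin B)) (hVcl : IsClosed V) (hVconv : Convex ℝ (V : Set (WeakBilin B)))
    (hVdom : (V ∩ {x | f x ≠ ⊤}).Nonempty)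
    (hfin : (⨅ x ∈ V, f x) < ⊤) :
    (⨅ x ∈ V, f x)
      = - ⨅ y : Y, ((⨆ x : WeakBilin B, ((B x y : EReal) - f x))
          + ⨆ x ∈ V, ((B x (-y) : ℝ) : EReal)) :=
  stmt4_general B f hlsc hconv K hK hdom V hVcl hVconv hVdom
end

section
/- Let X, Y be vector spaces in separating duality with X given the weak topology σ(X,Y). Let f : X → (−∞,+∞] be lower semicontinuous convex with dom f contained in a compact set, and let V ⊆ X be closed convex with V ∩ cl(dom f) = ∅. Then inf_{y∈Y} (f*(y) + ξ_V*(−y)) = −∞, i.e. sup_{y∈Y} inf_{x∈X} {f(x) + ⟨x,y⟩ − ξ_V*(y)} = +∞. -/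
/-!
The closure `D` of `dom f` is compact and convex and misses the closed convex set
`V`, so a continuous functional, necessarily of the form `B · y₀`, strictly separates them:
`B x y₀ < u` on `D` and `v < B x y₀` on `V`, with `u < v`. A lower semicontinuous function is
bounded below on a compact set, say by `m`, and `f = ⊤` off `D`. Hence at `t • y₀` the dual
objective is at most `(t u - m) - t v`, which tends to `-∞` as `t → ∞`.
-/

lemma LowerSemicontinuous.exists_coe_le_of_isCompact {α : Type*} [TopologicalSpace α]
    {f : α → EReal} (hf : LowerSemicontinuous f) (hbot : ∀ x, f x ≠ ⊥)
    {K : Set α} (hK : IsCompact K) (hdom : {x | f x ≠ ⊤} ⊆ K) :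
    ∃ m : ℝ, ∀ x, (m : EReal) ≤ f x := by
  have top_of_notMem : ∀ x ∉ K, f x = ⊤ := fun x hx => by
    by_contra h
    exact hx (hdom h)
  rcases K.eq_empty_or_nonempty with rfl | hKne
  · exact ⟨0, fun x => (top_of_notMem x (Set.notMem_empty x)).symm ▸ le_top⟩
  obtain ⟨x₀, hx₀, hmin⟩ := (hf.lowerSemicontinuousOn K).exists_isMinOn hKne hK
  obtain ⟨m, -, hm⟩ := EReal.lt_iff_exists_real_btwn.1 (bot_lt_iff_ne_bot.2 (hbot x₀))
  refine ⟨m, fun x => ?_⟩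
  by_cases hx : x ∈ K
  · exact hm.le.trans (hmin hx)
  · exact (top_of_notMem x hx).symm ▸ le_top

lemma convex_setOf_ne_top {E : Type*} [AddCommGroup E] [Module ℝ E] {f : E → EReal}
    (hbot : ∀ x, f x ≠ ⊥)
    (hconv : ∀ (x₁ x₂ : E) (t : ℝ), 0 ≤ t → t ≤ 1 →
      f (t • x₁ + (1 - t) • x₂) ≤ (t : EReal) * f x₁ + ((1 - t : ℝ) : EReal) * f x₂) :
    Convex ℝ {x | f x ≠ ⊤} := by
  intro x hx y hy a b ha hb hab
  obtain rfl : b = 1 - a := by linarith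
  have hle := hconv x y a ha (by linarith)
  rw [← EReal.coe_toReal hx (hbot x), ← EReal.coe_toReal hy (hbot y), ← EReal.coe_mul,
    ← EReal.coe_mul, ← EReal.coe_add] at hle
  exact ne_top_of_le_ne_top (EReal.coe_ne_top _) hle

lemma WeakBilin.exists_separating_of_isCompact_of_isClosed {E F : Type*} [AddCommGroup E]
    [Module ℝ E] [AddCommGroup F] [Module ℝ F] (B : E →ₗ[ℝ] F →ₗ[ℝ] ℝ)
    {s t : Set (WeakBilin B)} (hs₁ : Convex ℝ s) (hs₂ : IsCompact s) (ht₁ : Convex ℝ t)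
    (ht₂ : IsClosed t) (disj : Disjoint s t) :
    ∃ (y : F) (u v : ℝ), (∀ a ∈ s, B a y < u) ∧ u < v ∧ ∀ b ∈ t, v < B b y := by
  obtain ⟨g, u, v, hu, huv, hv⟩ := geometric_hahn_banach_compact_closed hs₁ hs₂ ht₁ ht₂ disj
  obtain ⟨y, rfl⟩ := LinearMap.dualEmbedding_surjective B g
  exact ⟨y, u, v, hu, huv, hv⟩

lemma iSup_coe_sub_le_of_forall_le {α : Type*} {φ : α → ℝ} {f : α → EReal} {m c : ℝ}
    (hm : ∀ x, (m : EReal) ≤ f x) (hφ : ∀ x, f x ≠ ⊤ → φ x ≤ c) :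
    ⨆ x, ((φ x : EReal) - f x) ≤ ((c - m : ℝ) : EReal) := by
  refine iSup_le fun x => ?_
  by_cases hfx : f x = ⊤
  · simp [hfx]
  · rw [EReal.coe_sub]
    exact EReal.sub_le_sub (EReal.coe_le_coe_iff.2 (hφ x hfx)) (hm x)

theorem stmt5_general {X Y : Type*} [AddCommGroup X] [Module ℝ X] [AddCommGroup Y] [Module ℝ Y]
    (B : X →ₗ[ℝ] Y →ₗ[ℝ] ℝ)
    (f : WeakBilin B → EReal)
    (hbot : ∀ x, f x ≠ ⊥)
    (hlsc : LowerSemicontinuous f)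
    (hconv : ∀ (x₁ x₂ : WeakBilin B) (t : ℝ), 0 ≤ t → t ≤ 1 →
      f (t • x₁ + (1 - t) • x₂) ≤ (t : EReal) * f x₁ + ((1 - t : ℝ) : EReal) * f x₂)
    (K : Set (WeakBilin B)) (hK : IsCompact K) (hdom : {x | f x ≠ ⊤} ⊆ K)
    (V : Set (WeakBilin B)) (hVcl : IsClosed V) (hVconv : Convex ℝ (V : Set (WeakBilin B)))
    (hVdom : V ∩ closure {x | f x ≠ ⊤} = ∅) :
    (⨅ y : Y, ((⨆ x : WeakBilin B, ((B x y : EReal) - f x))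
        + ⨆ x ∈ V, ((B x (-y) : ℝ) : EReal))) = ⊥ := by
  obtain ⟨m, hm⟩ := hlsc.exists_coe_le_of_isCompact hbot hK hdom
  obtain ⟨y₀, u, v, hu, huv, hv⟩ := WeakBilin.exists_separating_of_isCompact_of_isClosed B
    (convex_setOf_ne_top hbot hconv).closure (hK.closure_of_subset hdom) hVconv hVcl
    (Set.disjoint_iff_inter_eq_empty.2 (by rwa [Set.inter_comm]))
  refine (EReal.eq_bot_iff_forall_lt _).2 fun r => ?_
  set t := (1 + |m + r|) / (v - u)
  have ht : 0 ≤ t := by have := sub_pos.2 huv; positivity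
  have hconj : ⨆ x : WeakBilin B, ((B x (t • y₀) : EReal) - f x) ≤ ((t * u - m : ℝ) : EReal) :=
    iSup_coe_sub_le_of_forall_le hm fun x hx => by
      rw [map_smul, smul_eq_mul]
      exact mul_le_mul_of_nonneg_left (hu x (subset_closure hx)).le ht
  have hsupp : ⨆ x ∈ V, ((B x (-(t • y₀)) : ℝ) : EReal) ≤ ((-(t * v) : ℝ) : EReal) :=
    iSup₂_le fun x hx => EReal.coe_le_coe_iff.2 <| by
      rw [map_neg, map_smul, smul_eq_mul, neg_le_neg_iff]
      exact mul_le_mul_of_nonneg_left (hv x hx).le ht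
  have htuv : t * (v - u) = 1 + |m + r| := div_mul_cancel₀ _ (sub_pos.2 huv).ne'
  calc _ ≤ (⨆ x : WeakBilin B, ((B x (t • y₀) : EReal) - f x))
        + ⨆ x ∈ V, ((B x (-(t • y₀)) : ℝ) : EReal) := iInf_le _ (t • y₀)
    _ ≤ ((t * u - m : ℝ) : EReal) + ((-(t * v) : ℝ) : EReal) := add_le_add hconj hsupp
    _ < r := by
      rw [← EReal.coe_add, EReal.coe_lt_coe_iff]
      linarith [neg_abs_le (m + r)]

/-- Lemma `app-A1`, second case: in the same separating-duality setting, if the closed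
convex set `V` does not meet the closure of `dom f`, then
`inf_{y∈Y} ( f*(y) + ξ_V*(−y) ) = −∞`. -/
theorem stmt5 {X Y : Type*} [AddCommGroup X] [Module ℝ X] [AddCommGroup Y] [Module ℝ Y]
    (B : X →ₗ[ℝ] Y →ₗ[ℝ] ℝ)
    (hsepX : ∀ x : X, x ≠ 0 → ∃ y : Y, B x y ≠ 0)
    (hsepY : ∀ y : Y, y ≠ 0 → ∃ x : X, B x y ≠ 0)
    (f : WeakBilin B → EReal)
    (hbot : ∀ x, f x ≠ ⊥)
    (hlsc : LowerSemicontinuous f)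
    (hconv : ∀ (x₁ x₂ : WeakBilin B) (t : ℝ), 0 ≤ t → t ≤ 1 →
      f (t • x₁ + (1 - t) • x₂) ≤ (t : EReal) * f x₁ + ((1 - t : ℝ) : EReal) * f x₂)
    (K : Set (WeakBilin B)) (hK : IsCompact K) (hdom : {x | f x ≠ ⊤} ⊆ K)
    (V : Set (WeakBilin B)) (hVcl : IsClosed V) (hVconv : Convex ℝ (V : Set (WeakBilin B)))
    (hVdom : V ∩ closure {x | f x ≠ ⊤} = ∅) :
    (⨅ y : Y, ((⨆ x : WeakBilin B, ((B x y : EReal) - f x))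
        + ⨆ x ∈ V, ((B x (-y) : ℝ) : EReal))) = ⊥ :=
  stmt5_general B f hbot hlsc hconv K hK hdom V hVcl hVconv hVdom
end

section
/- Let X be a Polish space and P, Q Borel probability measures on X. Then the relative entropy admits the variational representation H(Q|P) = sup over bounded continuous f of (∫ f dQ − log ∫ e^f dP). -/
open MeasureTheory Classical
open scoped ENNReal BoundedContinuousFunction

/-- Relative entropy `H(Q|P) = ∫ log(dQ/dP) dQ` if `Q ≪ P` (and the log-likelihood
ratio is integrable), `+∞` otherwise. -/
noncomputable def relEntropy {α : Type*} [MeasurableSpace α] (Q P : Measure α) : ℝ≥0∞ :=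
  if Q ≪ P ∧ Integrable (llr Q P) Q then ENNReal.ofReal (∫ x, llr Q P x ∂Q) else ⊤

/-!
For bounded `f`, Gibbs' inequality for `Q` against the tilted measure `P.tilted f ∝ e^f P` is
`H(Q|P) - (∫ f dQ - log ∫ e^f dP) = H(Q | P.tilted f) ≥ 0`.

Conversely, for `Q ≪ P` with density `ρ`, the bound `log y ≤ y - 1` gives
`∫ f dQ - log ∫ e^f dP ≥ ∫ (ρ f + 1 - e^f) dP`. For `f = log` of `ρ` clamped to `[e^{-n}, e^n]`
the integrand is nonnegative and tends to `ρ log ρ + 1 - ρ`, so Fatou's lemma recovers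
`H(Q|P) = ∫ (ρ log ρ + 1 - ρ) dP`, finite or not. If `Q` is not absolutely continuous, multiples of
the indicator of a `P`-null set charged by `Q` make the functional unbounded.

Finally, a bounded measurable function is an a.e. limit (for `P + Q`) of uniformly bounded
continuous ones, and the functional passes to such limits by dominated convergence.
-/

open Real Filter Topology InformationTheory

noncomputable section

def dvFunctional {α : Type*} [MeasurableSpace α] (P Q : Measure α) (f : α → ℝ) : ℝ :=
  ∫ x, f x ∂Q - log (∫ x, exp (f x) ∂P)

-- Clamping `ρ` rather than `log ρ`: `llr` is the junk value `log 0 = 0` where `ρ = 0`, whereas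
-- `log (clampExp n 0) = -n`.
def clampExp (n : ℕ) (r : ℝ) : ℝ := max (min r (exp n)) (exp (-n))

end

section ClampExp

variable (n : ℕ) {r : ℝ}

lemma clampExp_pos : 0 < clampExp n r := lt_max_of_lt_right (exp_pos _)

lemma abs_log_clampExp_le : |log (clampExp n r)| ≤ n := by
  have hlo : exp (-n) ≤ clampExp n r := le_max_right _ _
  have hhi : clampExp n r ≤ exp n :=
    max_le (min_le_right _ _) (exp_le_exp.2 (by linarith [Nat.cast_nonneg (α := ℝ) n]))
  rw [abs_le]
  exact ⟨by simpa using log_le_log (exp_pos _) hlo, by simpa using log_le_log (clampExp_pos n) hhi⟩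

lemma mul_log_clampExp_add_one_sub_nonneg :
    0 ≤ r * log (clampExp n r) + 1 - clampExp n r := by
  set c := clampExp n r
  have hcpos : 0 < c := clampExp_pos n
  -- `c` lies between `1` and `r`
  have hsign : 0 ≤ (r - c) * log c := by
    have hn : (0 : ℝ) ≤ n := n.cast_nonneg
    rcases le_total r (exp (-n)) with hlo | hlo
    · have hc : c = exp (-n) := max_eq_right ((min_le_left _ _).trans hlo)
      rw [hc, log_exp]
      exact mul_nonneg_of_nonpos_of_nonpos (by linarith) (by linarith)
    rcases le_total r (exp n) with hhi | hhi
    · have hc : c = r := by simp only [c, clampExp, min_eq_left hhi, max_eq_left hlo]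
      simp [hc]
    · have hc : c = exp n := by
        simp only [c, clampExp, min_eq_right hhi]
        exact max_eq_left (exp_le_exp.2 (by linarith))
      rw [hc, log_exp]
      exact mul_nonneg (by linarith) hn
  have hsplit : r * log c + 1 - c = klFun c + (r - c) * log c := by
    rw [klFun_apply]
    ring
  linarith [klFun_nonneg hcpos.le]

lemma tendsto_clampExp (hr : 0 ≤ r) : Tendsto (fun n ↦ clampExp n r) atTop (𝓝 r) := by
  have hmin : ∀ᶠ n : ℕ in atTop, min r (exp n) = r :=
    ((tendsto_exp_atTop.comp tendsto_natCast_atTop_atTop).eventually_ge_atTop r).mono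
      fun n hn ↦ min_eq_left hn
  have hmax : Tendsto (fun n : ℕ ↦ max r (exp (-n))) atTop (𝓝 (max r 0)) :=
    tendsto_const_nhds.max
      (tendsto_exp_neg_atTop_nhds_zero.comp tendsto_natCast_atTop_atTop)
  rw [max_eq_left hr] at hmax
  refine hmax.congr' (hmin.mono fun n hn ↦ ?_)
  simp only [clampExp, hn]

lemma tendsto_mul_log_clampExp_add_one_sub (hr : 0 ≤ r) :
    Tendsto (fun n ↦ r * log (clampExp n r) + 1 - clampExp n r) atTop (𝓝 (klFun r)) := by
  have hc := tendsto_clampExp hr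
  have hlog : Tendsto (fun n ↦ r * log (clampExp n r)) atTop (𝓝 (r * log r)) := by
    rcases hr.eq_or_lt with rfl | hr
    · simp
    · exact (hc.log hr.ne').const_mul r
  simpa [klFun_apply] using (hlog.add_const 1).sub hc

end ClampExp

section DonskerVaradhan

variable {α : Type*} [MeasurableSpace α] {P Q : Measure α} {f : α → ℝ}

lemma integrable_of_abs_le {μ : Measure α} [IsFiniteMeasure μ] {C : ℝ}
    (hf : AEStronglyMeasurable f μ) (hfC : ∀ x, |f x| ≤ C) : Integrable f μ :=
  .of_bound hf C (ae_of_all _ hfC)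

lemma integrable_exp_of_abs_le {μ : Measure α} [IsFiniteMeasure μ] {C : ℝ}
    (hf : Measurable f) (hfC : ∀ x, |f x| ≤ C) : Integrable (fun x ↦ exp (f x)) μ :=
  integrable_of_abs_le (measurable_exp.comp hf).aestronglyMeasurable fun x ↦ by
    rw [abs_of_pos (exp_pos _)]
    exact exp_le_exp.2 (abs_le.1 (hfC x)).2

lemma relEntropy_eq_klDiv [IsProbabilityMeasure P] [IsProbabilityMeasure Q] :
    relEntropy Q P = klDiv Q P := by
  unfold relEntropy
  split_ifs with h
  · simp [klDiv_of_ac_of_integrable h.1 h.2]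
  · exact (klDiv_eq_top_iff.2 fun hQP hllr ↦ h ⟨hQP, hllr⟩).symm

lemma dvFunctional_le_integral_llr [IsProbabilityMeasure P] [IsProbabilityMeasure Q]
    (hQP : Q ≪ P) (hllr : Integrable (llr Q P) Q) (hfQ : Integrable f Q)
    (hfP : Integrable (fun x ↦ exp (f x)) P) :
    dvFunctional P Q f ≤ ∫ x, llr Q P x ∂Q := by
  have := isProbabilityMeasure_tilted hfP
  -- Gibbs' inequality for `Q` against the tilted measure `P.tilted f`
  have hgibbs := integral_llr_add_sub_measure_univ_nonneg
    (hQP.trans (absolutelyContinuous_tilted hfP)) (integrable_llr_tilted_right hQP hfQ hllr hfP)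
  rw [integral_llr_tilted_right hQP hfQ hfP hllr] at hgibbs
  simp only [probReal_univ, add_sub_cancel_right] at hgibbs
  unfold dvFunctional
  linarith

lemma dvFunctional_le_relEntropy [IsProbabilityMeasure P] [IsProbabilityMeasure Q]
    (hfQ : Integrable f Q) (hfP : Integrable (fun x ↦ exp (f x)) P) :
    (dvFunctional P Q f : EReal) ≤ relEntropy Q P := by
  unfold relEntropy
  split_ifs with h
  · rw [EReal.coe_ennreal_ofReal]
    exact EReal.coe_le_coe_iff.2 ((dvFunctional_le_integral_llr h.1 h.2 hfQ hfP).trans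
      (le_max_left _ _))
  · exact le_top

lemma integral_rnDeriv_mul_add_one_sub_exp_le_dvFunctional [IsProbabilityMeasure P]
    [SigmaFinite Q] (hQP : Q ≪ P) (hfQ : Integrable f Q)
    (hfP : Integrable (fun x ↦ exp (f x)) P) :
    ∫ x, ((Q.rnDeriv P x).toReal * f x + 1 - exp (f x)) ∂P ≤ dvFunctional P Q f := by
  have hρf : Integrable (fun x ↦ (Q.rnDeriv P x).toReal * f x) P :=
    (integrable_toReal_rnDeriv_mul_iff hQP).2 hfQ
  have hρf1 : Integrable (fun x ↦ (Q.rnDeriv P x).toReal * f x + 1) P :=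
    hρf.add (integrable_const 1)
  rw [integral_sub hρf1 hfP, integral_add hρf (integrable_const 1),
    integral_toReal_rnDeriv_mul hQP]
  simp only [integral_const, probReal_univ, smul_eq_mul, one_mul]
  unfold dvFunctional
  linarith [log_le_sub_one_of_pos (integral_exp_pos hfP)]

lemma relEntropy_le_iSup_dvFunctional_log_clampExp [IsProbabilityMeasure P]
    [IsProbabilityMeasure Q] (hQP : Q ≪ P) :
    relEntropy Q P ≤ ⨆ n : ℕ,
      ENNReal.ofReal (dvFunctional P Q fun x ↦ log (clampExp n (Q.rnDeriv P x).toReal)) := by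
  set ρ : α → ℝ := fun x ↦ (Q.rnDeriv P x).toReal
  have hρ : Measurable ρ := (Measure.measurable_rnDeriv Q P).ennreal_toReal
  set F : ℕ → α → ℝ := fun n x ↦ log (clampExp n (ρ x))
  have hF n : Measurable (F n) :=
    measurable_log.comp ((hρ.min measurable_const).max measurable_const)
  have hFQ n : Integrable (F n) Q :=
    integrable_of_abs_le (hF n).aestronglyMeasurable fun _ ↦ abs_log_clampExp_le n
  have hFP n : Integrable (fun x ↦ exp (F n x)) P :=
    integrable_exp_of_abs_le (hF n) fun _ ↦ abs_log_clampExp_le n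
  set G : ℕ → α → ℝ := fun n x ↦ ρ x * F n x + 1 - exp (F n x)
  have hG n x : G n x = ρ x * log (clampExp n (ρ x)) + 1 - clampExp n (ρ x) := by
    simp only [G, F, exp_log (clampExp_pos _)]
  have hGP n : Integrable (G n) P :=
    (((integrable_toReal_rnDeriv_mul_iff hQP).2 (hFQ n)).add (integrable_const 1)).sub (hFP n)
  have hGm n : Measurable fun x ↦ ENNReal.ofReal (G n x) :=
    (((hρ.mul (hF n)).add_const 1).sub (measurable_exp.comp (hF n))).ennreal_ofReal
  have hG_lim x :
      Tendsto (fun n ↦ ENNReal.ofReal (G n x)) atTop (𝓝 (ENNReal.ofReal (klFun (ρ x)))) := by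
    simp only [hG]
    exact (ENNReal.continuous_ofReal.tendsto _).comp
      (tendsto_mul_log_clampExp_add_one_sub ENNReal.toReal_nonneg)
  calc relEntropy Q P = ∫⁻ x, ENNReal.ofReal (klFun (ρ x)) ∂P := by
        rw [relEntropy_eq_klDiv, klDiv_eq_lintegral_klFun_of_ac hQP]
    _ = ∫⁻ x, liminf (fun n ↦ ENNReal.ofReal (G n x)) atTop ∂P :=
        lintegral_congr fun x ↦ (hG_lim x).liminf_eq.symm
    _ ≤ liminf (fun n ↦ ∫⁻ x, ENNReal.ofReal (G n x) ∂P) atTop := lintegral_liminf_le hGm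
    _ ≤ ⨆ n, ∫⁻ x, ENNReal.ofReal (G n x) ∂P := (liminf_le_limsup).trans limsup_le_iSup
    _ ≤ _ := iSup_mono fun n ↦ by
        rw [← ofReal_integral_eq_lintegral_ofReal (hGP n) (ae_of_all _ fun x ↦ by
          simpa only [Pi.zero_apply, hG] using mul_log_clampExp_add_one_sub_nonneg n)]
        exact ENNReal.ofReal_le_ofReal
          (integral_rnDeriv_mul_add_one_sub_exp_le_dvFunctional hQP (hFQ n) (hFP n))

lemma dvFunctional_indicator_const [IsProbabilityMeasure P] {s : Set α} (hs : MeasurableSet s)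
    (hPs : P s = 0) (c : ℝ) : dvFunctional P Q (s.indicator fun _ ↦ c) = c * Q.real s := by
  have hexp : (fun x ↦ exp (s.indicator (fun _ ↦ c) x)) =ᵐ[P] fun _ ↦ 1 := by
    filter_upwards [measure_eq_zero_iff_ae_notMem.1 hPs] with x hx
    simp [hx]
  simp [dvFunctional, integral_indicator_const _ hs, integral_congr_ae hexp, mul_comm]

lemma tendsto_dvFunctional [IsFiniteMeasure P] [NeZero P] [IsFiniteMeasure Q] {F : ℕ → α → ℝ}
    {C : ℝ} (hF : ∀ n, Measurable (F n)) (hFC : ∀ n x, |F n x| ≤ C) (hf : Measurable f)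
    (hfC : ∀ x, |f x| ≤ C)
    (hFP : ∀ᵐ x ∂P, Tendsto (fun n ↦ F n x) atTop (𝓝 (f x)))
    (hFQ : ∀ᵐ x ∂Q, Tendsto (fun n ↦ F n x) atTop (𝓝 (f x))) :
    Tendsto (fun n ↦ dvFunctional P Q (F n)) atTop (𝓝 (dvFunctional P Q f)) := by
  have hQ : Tendsto (fun n ↦ ∫ x, F n x ∂Q) atTop (𝓝 (∫ x, f x ∂Q)) :=
    tendsto_integral_of_dominated_convergence (fun _ ↦ C) (fun n ↦ (hF n).aestronglyMeasurable)
      (integrable_const C) (fun n ↦ ae_of_all _ (hFC n)) hFQ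
  have hP : Tendsto (fun n ↦ ∫ x, exp (F n x) ∂P) atTop (𝓝 (∫ x, exp (f x) ∂P)) :=
    tendsto_integral_of_dominated_convergence (fun _ ↦ exp C)
      (fun n ↦ (measurable_exp.comp (hF n)).aestronglyMeasurable) (integrable_const _)
      (fun n ↦ ae_of_all _ fun x ↦ by
        rw [Real.norm_eq_abs, abs_of_pos (exp_pos _)]
        exact exp_le_exp.2 (abs_le.1 (hFC n x)).2)
      (hFP.mono fun x hx ↦ (continuous_exp.tendsto _).comp hx)
  exact hQ.sub (hP.log (integral_exp_pos (integrable_exp_of_abs_le hf hfC)).ne')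

end DonskerVaradhan

section BoundedContinuous

variable {X : Type*} [PseudoMetricSpace X] [MeasurableSpace X] [BorelSpace X]

lemma exists_seq_boundedContinuous_tendsto_ae (μ : Measure X) [IsFiniteMeasure μ] {f : X → ℝ}
    (hf : Measurable f) {C : ℝ} (hfC : ∀ x, |f x| ≤ C) :
    ∃ g : ℕ → X →ᵇ ℝ, (∀ n x, |g n x| ≤ C) ∧
      ∀ᵐ x ∂μ, Tendsto (fun n ↦ g n x) atTop (𝓝 (f x)) := by
  have hfμ : Integrable f μ := integrable_of_abs_le hf.aestronglyMeasurable hfC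
  choose g hg _ using fun n : ℕ ↦
    hfμ.exists_boundedContinuous_lintegral_sub_le (ε := (n : ℝ≥0∞)⁻¹) (by simp)
  have hL1 : Tendsto (fun n ↦ eLpNorm (⇑(g n) - f) 1 μ) atTop (𝓝 0) := by
    refine tendsto_of_tendsto_of_tendsto_of_le_of_le tendsto_const_nhds
      ENNReal.tendsto_inv_nat_nhds_zero (fun _ ↦ zero_le) fun n ↦ ?_
    simpa only [eLpNorm_one_eq_lintegral_enorm, Pi.sub_apply, enorm_sub_rev] using hg n
  obtain ⟨ns, -, hns⟩ := (tendstoInMeasure_of_tendsto_eLpNorm one_ne_zero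
    (fun n ↦ (g n).continuous.aestronglyMeasurable) hf.aestronglyMeasurable
    hL1).exists_seq_tendsto_ae
  -- truncating to `[-C, C]` keeps the limit, since `f` already takes values there
  refine ⟨fun n ↦ g (ns n) ⊓ .const X C ⊔ .const X (-C), fun n x ↦ ?_, ?_⟩
  · have hC : 0 ≤ C := (abs_nonneg _).trans (hfC x)
    simp only [BoundedContinuousFunction.coe_sup, BoundedContinuousFunction.coe_inf,
      BoundedContinuousFunction.const_apply', Pi.sup_apply, Pi.inf_apply]
    exact abs_le.2 ⟨le_sup_right, sup_le inf_le_right (by linarith)⟩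
  · filter_upwards [hns] with x hx
    have hfx : f x = f x ⊓ C ⊔ -C := by
      rw [inf_eq_left.2 (abs_le.1 (hfC x)).2, sup_eq_left.2 (abs_le.1 (hfC x)).1]
    rw [hfx]
    exact (hx.inf_nhds tendsto_const_nhds).sup_nhds tendsto_const_nhds

variable (P Q : Measure X)

lemma dvFunctional_le_iSup_boundedContinuous [IsFiniteMeasure P] [NeZero P] [IsFiniteMeasure Q]
    {f : X → ℝ} (hf : Measurable f) {C : ℝ} (hfC : ∀ x, |f x| ≤ C) :
    (dvFunctional P Q f : EReal) ≤ ⨆ g : X →ᵇ ℝ, (dvFunctional P Q g : EReal) := by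
  obtain ⟨g, hgC, hg⟩ := exists_seq_boundedContinuous_tendsto_ae (P + Q) hf hfC
  obtain ⟨hgP, hgQ⟩ := ae_add_measure_iff.1 hg
  exact le_of_tendsto' ((continuous_coe_real_ereal.tendsto _).comp
      (tendsto_dvFunctional (fun n ↦ (g n).continuous.measurable) hgC hf hfC hgP hgQ))
    fun n ↦ le_iSup (fun g : X →ᵇ ℝ ↦ (dvFunctional P Q g : EReal)) (g n)

variable [IsProbabilityMeasure P] [IsProbabilityMeasure Q]

theorem iSup_dvFunctional_le_relEntropy :
    ⨆ g : X →ᵇ ℝ, (dvFunctional P Q g : EReal) ≤ relEntropy Q P :=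
  iSup_le fun g ↦ dvFunctional_le_relEntropy (g.integrable Q)
    (integrable_exp_of_abs_le g.continuous.measurable g.norm_coe_le_norm)

theorem relEntropy_le_iSup_dvFunctional :
    (relEntropy Q P : EReal) ≤ ⨆ g : X →ᵇ ℝ, (dvFunctional P Q g : EReal) := by
  by_cases hQP : Q ≪ P
  · have hS : (0 : EReal) ≤ ⨆ g : X →ᵇ ℝ, (dvFunctional P Q g : EReal) := by
      simpa [dvFunctional] using le_iSup (fun g : X →ᵇ ℝ ↦ (dvFunctional P Q g : EReal)) 0
    rw [← EReal.coe_toENNReal hS, EReal.coe_ennreal_le_coe_ennreal_iff]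
    refine (relEntropy_le_iSup_dvFunctional_log_clampExp hQP).trans (iSup_le fun n ↦ ?_)
    rw [← EReal.real_coe_toENNReal]
    refine EReal.toENNReal_le_toENNReal (dvFunctional_le_iSup_boundedContinuous P Q ?_
      fun _ ↦ abs_log_clampExp_le n)
    exact measurable_log.comp (((Measure.measurable_rnDeriv Q P).ennreal_toReal.min
      measurable_const).max measurable_const)
  · obtain ⟨s, hs, hPs, hQs⟩ : ∃ s, MeasurableSet s ∧ P s = 0 ∧ Q s ≠ 0 := by
      by_contra! h
      exact hQP (Measure.AbsolutelyContinuous.mk h)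
    have hQs' : 0 < Q.real s := ENNReal.toReal_pos hQs (measure_ne_top _ _)
    rw [show relEntropy Q P = ⊤ from if_neg fun h ↦ hQP h.1, EReal.coe_ennreal_top, top_le_iff,
      EReal.eq_top_iff_forall_lt]
    intro y
    have := dvFunctional_le_iSup_boundedContinuous P Q (measurable_const.indicator hs)
      (norm_indicator_le_norm_self (fun _ ↦ (y + 1) / Q.real s))
    rw [dvFunctional_indicator_const hs hPs, div_mul_cancel₀ _ hQs'.ne'] at this
    exact (EReal.coe_lt_coe_iff.2 (lt_add_one y)).trans_le this

end BoundedContinuous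

theorem stmt14_general {X : Type*}
    [MetricSpace X]
    [MeasurableSpace X] [BorelSpace X]
    (P Q : Measure X) [IsProbabilityMeasure P] [IsProbabilityMeasure Q] :
    (relEntropy Q P : EReal)
      = ⨆ f : X →ᵇ ℝ,
          (((∫ x, f x ∂Q - Real.log (∫ x, Real.exp (f x) ∂P) : ℝ)) : EReal) :=
  le_antisymm (relEntropy_le_iSup_dvFunctional P Q) (iSup_dvFunctional_le_relEntropy P Q)

/-- Donsker–Varadhan variational representation of the relative entropy on a Polish
space: `H(Q|P) = sup_{f ∈ C_b(X)} ( ∫ f dQ − log ∫ e^f dP )`. -/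
theorem stmt14 {X : Type*}
    [MetricSpace X] [CompleteSpace X] [TopologicalSpace.SeparableSpace X]
    [MeasurableSpace X] [BorelSpace X]
    (P Q : Measure X) [IsProbabilityMeasure P] [IsProbabilityMeasure Q] :
    (relEntropy Q P : EReal)
      = ⨆ f : X →ᵇ ℝ,
          (((∫ x, f x ∂Q - Real.log (∫ x, Real.exp (f x) ∂P) : ℝ)) : EReal) :=
  stmt14_general P Q
end
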